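/- Each of the three points (r₁,r₂) = (−512/2187, −256/6561), (2/243, 1/11664), (−4000/2187, 2500/6561) in ℂ² is a common zero of the three polynomials P₁, P₂, P₃; conversely, every common zero (r₁,r₂) ∈ ℂ² of P₁, P₂, P₃ satisfying −1152r₂² + 96r₁r₂ + r₁² ≠ 0 is one of these three points. -/
import Mathlib


/-- `P₁`, arising from a 2×2 minor of the Jacobian of the birational parametrization
`(r₁,r₂) ↦ (i₁,i₂,i₃)` of the Shaska surface `𝔖₃`. -/
def P1 (r1 r2 : ℂ) : ℂ :=
  3*r1^8 + 720*r1^7*r2 + 69120*r1^6*r2^2 + 2048*r1^5*r2^2 + 3317760*r1^5*r2^3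
    + 79626240*r1^4*r2^4 - 417792*r1^4*r2^3 - 24772608*r1^3*r2^4
    + 764411904*r1^3*r2^5 - 113246208*r1^2*r2^5 + 50331648*r1*r2^5
    - 5435817984*r1*r2^6 - 2415919104*r2^6

/-- `P₂`, arising from a 2×2 minor of the Jacobian of the birational parametrization
`(r₁,r₂) ↦ (i₁,i₂,i₃)` of the Shaska surface `𝔖₃`. -/
def P2 (r1 r2 : ℂ) : ℂ :=
  9*r1^5 + 1296*r1^4*r2 + 62208*r1^3*r2^2 - 10240*r1^2*r2^2 + 995328*r1^2*r2^3
    + 786432*r1*r2^3 - 2359296*r2^4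

/-- `P₃`, arising from a 2×2 minor of the Jacobian of the birational parametrization
`(r₁,r₂) ↦ (i₁,i₂,i₃)` of the Shaska surface `𝔖₃`. -/
def P3 (r1 r2 : ℂ) : ℂ :=
  9*r1^8 + 2160*r1^7*r2 + 207360*r1^6*r2^2 + 9953280*r1^5*r2^3 + 38912*r1^5*r2^2
    + 238878720*r1^4*r2^4 - 3735552*r1^4*r2^3 + 2293235712*r1^3*r2^5
    - 247726080*r1^3*r2^4 + 905969664*r1^2*r2^5 + 201326592*r1*r2^5
    - 5435817984*r1*r2^6 - 4831838208*r2^6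

/-- Each of the three points `(−512/2187, −256/6561)`, `(2/243, 1/11664)`,
`(−4000/2187, 2500/6561)` is a common zero of `P₁, P₂, P₃`; conversely, every common
zero with `−1152r₂² + 96r₁r₂ + r₁² ≠ 0` is one of these three points. -/
theorem stmt_10 :
    (P1 (-512/2187) (-256/6561) = 0 ∧ P2 (-512/2187) (-256/6561) = 0 ∧
      P3 (-512/2187) (-256/6561) = 0) ∧
    (P1 (2/243) (1/11664) = 0 ∧ P2 (2/243) (1/11664) = 0 ∧ P3 (2/243) (1/11664) = 0) ∧
    (P1 (-4000/2187) (2500/6561) = 0 ∧ P2 (-4000/2187) (2500/6561) = 0 ∧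
      P3 (-4000/2187) (2500/6561) = 0) ∧
    (∀ r1 r2 : ℂ, P1 r1 r2 = 0 → P2 r1 r2 = 0 → P3 r1 r2 = 0 →
      -1152*r2^2 + 96*r1*r2 + r1^2 ≠ 0 →
      (r1, r2) = (-512/2187, -256/6561) ∨ (r1, r2) = (2/243, 1/11664) ∨
        (r1, r2) = (-4000/2187, 2500/6561)) := by
  refine ⟨⟨by simp only [P1]; norm_num, by simp only [P2]; norm_num, by simp only [P3]; norm_num⟩,
    ⟨by simp only [P1]; norm_num, by simp only [P2]; norm_num, by simp only [P3]; norm_num⟩,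
    ⟨by simp only [P1]; norm_num, by simp only [P2]; norm_num, by simp only [P3]; norm_num⟩, ?_⟩
  intro r1 r2 h1 h2 h3 hQ
  simp only [P1] at h1
  simp only [P2] at h2
  simp only [P3] at h3
  have hu : r1^10 * (2187*r1+512) * (243*r1-2)^2 * (2187*r1+4000) = 0 := by
    linear_combination ((282429536481/8)*r1^8 + (3389154437772)*r1^7*r2 + (1403624431647/2)*r1^7 + (81339706506528)*r1^6*r2^2 + (40902305546664)*r1^6*r2 + (2719358619273/2)*r1^6 + (884583255396096)*r1^5*r2^2 + (60786638229744)*r1^5*r2 + (365124540132)*r1^5 + (-192805230237696)*r1^4*r2^3 + (2027553363077760)*r1^4*r2^2 + (-7246086183072)*r1^4*r2 + (18250143120)*r1^4 + (-1934928757776384)*r1^3*r2^3 + (1359473964691968)*r1^3*r2^2 + (-4205488215168)*r1^3*r2 + (3702717440)*r1^3 + (-3233074671673344)*r1^2*r2^3 + (205255133429760)*r1^2*r2^2 + (19632838656)*r1^2*r2 + (-331264000/3)*r1^2 + (-613664334544896)*r1*r2^3 + (-2562675802112)*r1*r2^2 + (1064960000)*r1*r2 + (7744354516992)*r2^3 +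 (-2477260800)*r2^2) * h1 + ((-94143178827/8)*r1^11 + (-2259436291848)*r1^10*r2 + (-467874810549/2)*r1^10 + (-162679413013056)*r1^9*r2^2 + (-36092092755240)*r1^9*r2 + (-843690753873/2)*r1^9 + (-5205741216417792)*r1^8*r2^3 + (-2164149447737472)*r1^8*r2^2 + (-68290823235312)*r1^8*r2 + (-57482472312)*r1^8 + (-62468894597013504)*r1^7*r2^4 + (-57245301044462592)*r1^7*r2^3 + (-3657315535923456)*r1^7*r2^2 + (-18517125136608)*r1^7*r2 + (6289956372)*r1^7 + (-626916917519548416)*r1^6*r2^4 + (-81652030555852800)*r1^6*r2^3 + (-403211569724928)*r1^6*r2^2 + (-963935762112)*r1^6*r2 + (-8971111744/9)*r1^6 + (444223250467651584)*r1^5*r2^5 + (-1005775051431444480)*r1^5*r2^4 + (14227561976426496)*r1^5*r2^3 + (74701754357760)*r1^5*r2^2 + (-150613612544/3)*r1^5*r2 + (75776000/3)*r1^5 + (4655508413680189440)*r1^4*r2^5 + (-156733776920051712)*r1^4*r2^4 + (7117590079438848)*r1^4*r2^3 + (-1564495880192)*r1^4*r2^2 + (1851392000)*r1^4*r2 + (9430371091498401792)*r1^3*r2^5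 + (-69590524546252800)*r1^3*r2^4 + (29390728200192)*r1^3*r2^3 + (22692495360)*r1^3*r2^2 + (4724551090584944640)*r1^2*r2^5 + (-17569218966847488)*r1^2*r2^4 + (26835165380608/3)*r1^2*r2^3 + (610549285766823936)*r1*r2^5 + (151694184808448)*r1*r2^4 + (-297795584000)*r1*r2^3 + (-7930219025399808)*r2^5 + (2536715059200)*r2^4) * h2 + ((-4088225600/9)*r1^3 + (37376000/3)*r1^2) * h3
  rcases mul_eq_zero.mp hu with h | hc
  · rcases mul_eq_zero.mp h with h | hb
    · rcases mul_eq_zero.mp h with ha | ha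
      · have hr1 : r1 = 0 := pow_eq_zero_iff (by norm_num) |>.mp ha
        subst hr1
        have hr2 : r2 = 0 := by
          have h4 : r2^4 = 0 := by linear_combination (-1/2359296 : ℂ) * h2
          exact pow_eq_zero_iff (by norm_num) |>.mp h4
        subst hr2
        exact absurd (by ring) hQ
      · have hr1 : r1 = -512/2187 := by linear_combination (1/2187 : ℂ) * ha
        subst hr1
        have hr2 : r2 = -256/6561 := by
          linear_combination ((-2716209545685176475/336649569704083456) + (-15706667639959547745609/10772786230530670592)*r2 + (-42181190767672166767071249/43091144922122682368)*r2^2 + (243865252612401578893625970048453/706005318404058027917312)*r2^3 + (-521562123766207600274402599128237819/45184340377859713786707968)*r2^4) * h2 + ((-6703205169920531065465402233/45184340377859713786707968) + (24106483279673837276166783490959/180737361511438855146831872)*r2 + (708042436174237133333406880380792123/92537529093856693835177918464)*r2^2) * h3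
        subst hr2
        exact Or.inl rfl
    · have hb' : (243*r1-2 : ℂ) = 0 := pow_eq_zero_iff (by norm_num) |>.mp hb
      have hr1 : r1 = 2/243 := by linear_combination (1/243 : ℂ) * hb'
      subst hr1
      have hr2 : r2 = 1/11664 := by
        linear_combination ((-80796545638155/436129792) + (185006552261827761/27258112)*r2 + (43208112173982601149/1703632)*r2^2 + (-234180140655402977553153/425908)*r2^3 + (195876017500469501253251259/106477)*r2^4) * h2 + ((-419090125903878046671/3489038336) + (2355212749293144984933/973504)*r2 + (-48519747454244738842548477/54516224)*r2^2) * h3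
      subst hr2
      exact Or.inr (Or.inl rfl)
  · have hr1 : r1 = -4000/2187 := by linear_combination (1/2187 : ℂ) * hc
    subst hr1
    have hr2 : r2 = 2500/6561 := by
      linear_combination ((58344363198166548051/7354958643200000000000) + (-3285428107854156914337993/9193698304000000000000000)*r2 + (205806328721688729347650565469/11492122880000000000000000000)*r2^2 + (-750683589464364945754307196213783/2298424576000000000000000000000)*r2^3 + (1022904706878130627384329533144527647/5746061440000000000000000000000000)*r2^4) * h2 + ((90231162432361515709749146547/94143470632960000000000000000000) + (-56876457435806380034367814483341/1681133404160000000000000000000000)*r2 + (967182271483991215775844655852607853/11767933829120000000000000000000000000)*r2^2) * h3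
    subst hr2
    exact Or.inr (Or.inr rfl)
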